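/- arXiv:0809.0224 — 8 statements merged into one kernel-verified Lean document; each statement's English description precedes it below -/
import Mathlib

section
/- Let R be a commutative ring, σ : R → R a ring endomorphism, M an R-module of finite length, and τ : M → M a σ-semilinear endomorphism. Then the descending chain of submodules M_m := span_R(τ^m(M)) stabilizes: there exists n ≥ 0 with span_R(τ^m(M)) = span_R(τ^n(M)) for all m ≥ n. Moreover, setting M' := span_R(τ^n(M)), one has τ(M') ⊆ M', span_R(τ(M')) = M', τ^n(M) ⊆ M', and the σ-semilinear endomorphism induced by τ on the quotient module M/M' is nilpotent. -/
/-- **Canonical bijective/nilpotent filtration.**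
Let `R` be a commutative ring, `σ : R → R` a ring endomorphism, `M` an `R`-module of finite
length, and `τ : M → M` a `σ`-semilinear endomorphism.  Then the descending chain of submodules
`M_m := span_R (τ^m (M))` stabilizes: there is `n` with `span_R (τ^m (M)) = span_R (τ^n (M))`
for all `m ≥ n`.  Moreover, setting `M' := span_R (τ^n (M))`, one has `τ (M') ⊆ M'`,
`span_R (τ (M')) = M'`, `τ^n (M) ⊆ M'`, and the `σ`-semilinear endomorphism induced by `τ` on
the quotient `M ⧸ M'` is nilpotent. -/
theorem stmt0 {R M : Type*} [CommRing R] [AddCommGroup M] [Module R M]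
    (σ : R →+* R) (τ : M →ₛₗ[σ] M) (hfl : IsFiniteLength R M) :
    ∃ n : ℕ,
      (∀ m : ℕ, n ≤ m →
        Submodule.span R (Set.range (⇑τ)^[m]) = Submodule.span R (Set.range (⇑τ)^[n])) ∧
      ∃ hstab : Submodule.span R (Set.range (⇑τ)^[n]) ≤
          (Submodule.span R (Set.range (⇑τ)^[n])).comap τ,
        Submodule.span R (⇑τ '' (Submodule.span R (Set.range (⇑τ)^[n]) : Set M)) =
          Submodule.span R (Set.range (⇑τ)^[n]) ∧
        (∀ x : M, (⇑τ)^[n] x ∈ Submodule.span R (Set.range (⇑τ)^[n])) ∧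
        ∃ k : ℕ, ∀ y : M ⧸ Submodule.span R (Set.range (⇑τ)^[n]),
          (⇑(Submodule.mapQ _ _ τ hstab))^[k] y = 0 := by
  have hart : IsArtinian R M := (isFiniteLength_iff_isNoetherian_isArtinian.mp hfl).2
  set N : ℕ → Submodule R M := fun m => Submodule.span R (Set.range (⇑τ)^[m]) with hN
  -- antitone
  have hanti : ∀ m m' : ℕ, m ≤ m' → N m' ≤ N m := by
    intro m m' hmm
    apply Submodule.span_le.mpr
    rintro _ ⟨x, rfl⟩
    obtain ⟨k, rfl⟩ := Nat.exists_eq_add_of_le hmm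
    rw [Function.iterate_add_apply]
    exact Submodule.subset_span ⟨_, rfl⟩
  -- image of span lemma
  have himg : ∀ (s : Set M) (x : M), x ∈ Submodule.span R s →
      τ x ∈ Submodule.span R (⇑τ '' s) := by
    intro s x hx
    induction hx using Submodule.span_induction with
    | mem y hy => exact Submodule.subset_span ⟨y, hy, rfl⟩
    | zero => simp
    | add y z _ _ hy hz => rw [map_add]; exact Submodule.add_mem _ hy hz
    | smul r y _ hy => rw [map_smulₛₗ]; exact Submodule.smul_mem _ _ hy
  -- τ maps N m into N (m+1)
  have hstep : ∀ (m : ℕ) (x : M), x ∈ N m → τ x ∈ N (m + 1) := by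
    intro m x hx
    have hsub : ⇑τ '' Set.range (⇑τ)^[m] ⊆ (N (m + 1) : Set M) := by
      rintro _ ⟨_, ⟨y, rfl⟩, rfl⟩
      rw [← Function.iterate_succ_apply' τ]
      exact Submodule.subset_span ⟨y, rfl⟩
    exact Submodule.span_le.mpr hsub (himg _ _ hx)
  obtain ⟨n, hn⟩ := IsArtinian.monotone_stabilizes
    (⟨fun m => OrderDual.toDual (N m), fun a b h => hanti a b h⟩ : ℕ →o (Submodule R M)ᵒᵈ)
  have hn' : ∀ m, n ≤ m → N m = N n := fun m hm => (hn m hm).symm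
  refine ⟨n, hn', ?_⟩
  have hstab : N n ≤ (N n).comap τ := by
    intro x hx
    have := hstep n x hx
    rwa [hn' (n + 1) (Nat.le_succ n), Submodule.mem_comap] at *
  refine ⟨hstab, ?_, ?_, ?_⟩
  · apply le_antisymm
    · apply Submodule.span_le.mpr
      rintro _ ⟨x, hx, rfl⟩
      exact hstab hx
    · refine le_trans (le_of_eq (hn' (n + 1) (Nat.le_succ n)).symm) (Submodule.span_le.mpr ?_)
      rintro _ ⟨x, rfl⟩
      rw [Function.iterate_succ_apply']
      exact Submodule.subset_span ⟨(⇑τ)^[n] x, Submodule.subset_span ⟨x, rfl⟩, rfl⟩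
  · intro x; exact Submodule.subset_span ⟨x, rfl⟩
  · refine ⟨n, ?_⟩
    have key : ∀ (k : ℕ) (x : M),
        (⇑(Submodule.mapQ (N n) (N n) τ hstab))^[k] (Submodule.Quotient.mk x) =
          Submodule.Quotient.mk ((⇑τ)^[k] x) := by
      intro k
      induction k with
      | zero => intro x; rfl
      | succ k ih =>
        intro x
        rw [Function.iterate_succ_apply, Function.iterate_succ_apply]
        rw [Submodule.mapQ_apply]
        exact ih (τ x)
    intro y
    obtain ⟨x, rfl⟩ := Submodule.Quotient.mk_surjective _ y
    rw [key n x]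
    rw [Submodule.Quotient.mk_eq_zero]
    exact Submodule.subset_span ⟨x, rfl⟩
end

section
/- Let L be a field with an additive valuation v, let q > 1 be a real number, and let φ : L → L be a ring endomorphism with v(φ(x)) = q · v(x) for all x ∈ L. Let m, n ≥ 1 be integers, let C be a real number, let Δ be an n × n matrix of formal power series over L all of whose coefficients c satisfy v(c) ≥ C, and let f = (f_1, …, f_n) be a vector of formal power series over L satisfying the semilinear system f_i^{φ^m} = ∑_{j=1}^n Δ_{ij} · f_j for all i, where f^{φ^m} denotes the series obtained by applying φ^m to every coefficient. Then every coefficient c of every f_i satisfies v(c) ≥ C / (q^m − 1). -/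
/-!
Let `b` be the least valuation among the coefficients of degree `≤ k` of the `f_i`. Each such
coefficient of `∑ j, Δ i j * f j` is a sum of products of a coefficient of `Δ` with a coefficient
of some `f_j` of degree `≤ k`, so its valuation is at least `C + b`. Applying this at a
coefficient realising the minimum `b`, whose image under `φ^[m]` has valuation `q ^ m * b`, gives
`C + b ≤ q ^ m * b`, that is `C / (q ^ m - 1) ≤ b`.
-/

open PowerSeries

section Valuation

variable {R : Type*} (v : R → EReal)

theorem le_apply_sum [AddCommMonoid R] (hv_zero : v 0 = ⊤)
    (hv_add : ∀ x y : R, min (v x) (v y) ≤ v (x + y))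
    {ι : Type*} (s : Finset ι) (g : ι → R) {b : EReal}
    (h : ∀ j ∈ s, b ≤ v (g j)) : b ≤ v (∑ j ∈ s, g j) := by
  classical
  induction s using Finset.cons_induction with
  | empty => simp [hv_zero]
  | cons a s ha ih =>
    rw [Finset.sum_cons]
    exact (le_min (h a (by simp)) (ih fun j hj => h j (by simp [hj]))).trans (hv_add _ _)

theorem add_le_apply_coeff_mul [Semiring R] (hv_zero : v 0 = ⊤)
    (hv_add : ∀ x y : R, min (v x) (v y) ≤ v (x + y))
    (hv_mul : ∀ x y : R, v x + v y ≤ v (x * y))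
    {g h : R⟦X⟧} {a b : EReal} {k : ℕ}
    (hg : ∀ l, a ≤ v (coeff l g)) (hh : ∀ l ≤ k, b ≤ v (coeff l h)) :
    a + b ≤ v (coeff k (g * h)) := by
  rw [coeff_mul]
  refine le_apply_sum v hv_zero hv_add _ _ fun p hp => ?_
  exact (add_le_add (hg p.1) (hh p.2 (Finset.HasAntidiagonal.antidiagonal.snd_le hp))).trans (hv_mul _ _)

theorem apply_iterate_eq_pow_mul {φ : R → R} {q : ℝ}
    (hφ : ∀ x, v (φ x) = (q : EReal) * v x) (k : ℕ) (x : R) :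
    v (φ^[k] x) = ((q ^ k : ℝ) : EReal) * v x := by
  induction k with
  | zero => simp
  | succ k ih =>
    rw [Function.iterate_succ_apply', hφ, ih, ← mul_assoc, pow_succ', EReal.coe_mul]

end Valuation

theorem coe_div_sub_one_le_of_add_le_mul {C Q : ℝ} (hQ : 1 < Q) {b : EReal} (hb : b ≠ ⊥)
    (h : (C : EReal) + b ≤ (Q : EReal) * b) : ((C / (Q - 1) : ℝ) : EReal) ≤ b := by
  induction b using EReal.rec with
  | bot => exact absurd rfl hb
  | top => exact le_top
  | coe r =>
    rw [← EReal.coe_add, ← EReal.coe_mul, EReal.coe_le_coe_iff] at h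
    rw [EReal.coe_le_coe_iff, div_le_iff₀ (by linarith)]
    linarith

theorem coe_div_sub_one_le_of_forall_lowerBound {ι : Type*} [Finite ι] {w : ι → EReal}
    (hw : ∀ p, w p ≠ ⊥) {C Q : ℝ} (hQ : 1 < Q)
    (h : ∀ b : EReal, (∀ p, b ≤ w p) → ∀ p, (C : EReal) + b ≤ (Q : EReal) * w p) (p : ι) :
    ((C / (Q - 1) : ℝ) : EReal) ≤ w p := by
  have : Nonempty ι := ⟨p⟩
  obtain ⟨p₀, hp₀⟩ := Finite.exists_min w
  exact (coe_div_sub_one_le_of_add_le_mul hQ (hw p₀) (h _ hp₀ p₀)).trans (hp₀ p)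

theorem stmt3_general {L : Type*} [Field L] (v : L → EReal)
    (hv_top : ∀ x : L, v x = ⊤ ↔ x = 0)
    (hv_bot : ∀ x : L, v x ≠ ⊥)
    (hv_mul : ∀ x y : L, v (x * y) = v x + v y)
    (hv_add : ∀ x y : L, min (v x) (v y) ≤ v (x + y))
    (q : ℝ) (hq : 1 < q) (φ : L →+* L)
    (hφ : ∀ x : L, v (φ x) = (q : EReal) * v x)
    (m n : ℕ) (hm : 1 ≤ m) (C : ℝ)
    (Δ : Matrix (Fin n) (Fin n) (PowerSeries L))
    (hΔ : ∀ (i j : Fin n) (k : ℕ), ((C : ℝ) : EReal) ≤ v (PowerSeries.coeff k (Δ i j)))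
    (f : Fin n → PowerSeries L)
    (hf : ∀ (i : Fin n) (k : ℕ),
      (⇑φ)^[m] (PowerSeries.coeff k (f i)) =
        PowerSeries.coeff k (∑ j : Fin n, Δ i j * f j)) :
    ∀ (i : Fin n) (k : ℕ),
      ((C / (q ^ m - 1) : ℝ) : EReal) ≤ v (PowerSeries.coeff k (f i)) := by
  intro i k
  have hv_zero : v 0 = ⊤ := (hv_top 0).mpr rfl
  have hqm : 1 < q ^ m := one_lt_pow₀ hq (by omega)
  let w : Fin n × Fin (k + 1) → EReal := fun p => v (coeff p.2 (f p.1))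
  refine coe_div_sub_one_le_of_forall_lowerBound (w := w) (fun _ => hv_bot _) hqm
    (fun b hb p => ?_) (i, Fin.last k)
  rw [← apply_iterate_eq_pow_mul v hφ, hf, map_sum]
  refine le_apply_sum v hv_zero hv_add _ _ fun j _ => ?_
  exact add_le_apply_coeff_mul v hv_zero hv_add (fun x y => (hv_mul x y).ge) (hΔ p.1 j)
    fun l hl => hb (j, ⟨l, by omega⟩)

/-- **Valuation bound for solutions of semilinear systems over power series.**
Let `L` be a field with an additive valuation `v`, `q > 1` real, and `φ : L → L` a ring
endomorphism with `v (φ x) = q * v x`.  Let `Δ` be an `n × n` matrix of power series all of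
whose coefficients `c` satisfy `v c ≥ C`, and let `f = (f_1, …, f_n)` be power series with
`f_i^{φ^m} = ∑_j Δ_{i j} * f_j` for all `i` (where `φ^m` is applied to every coefficient).
Then every coefficient `c` of every `f_i` satisfies `v c ≥ C / (q^m - 1)`. -/
theorem stmt3 {L : Type*} [Field L] (v : L → EReal)
    (hv_top : ∀ x : L, v x = ⊤ ↔ x = 0)
    (hv_bot : ∀ x : L, v x ≠ ⊥)
    (hv_mul : ∀ x y : L, v (x * y) = v x + v y)
    (hv_add : ∀ x y : L, min (v x) (v y) ≤ v (x + y))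
    (q : ℝ) (hq : 1 < q) (φ : L →+* L)
    (hφ : ∀ x : L, v (φ x) = (q : EReal) * v x)
    (m n : ℕ) (hm : 1 ≤ m) (hn : 1 ≤ n) (C : ℝ)
    (Δ : Matrix (Fin n) (Fin n) (PowerSeries L))
    (hΔ : ∀ (i j : Fin n) (k : ℕ), ((C : ℝ) : EReal) ≤ v (PowerSeries.coeff k (Δ i j)))
    (f : Fin n → PowerSeries L)
    (hf : ∀ (i : Fin n) (k : ℕ),
      (⇑φ)^[m] (PowerSeries.coeff k (f i)) =
        PowerSeries.coeff k (∑ j : Fin n, Δ i j * f j)) :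
    ∀ (i : Fin n) (k : ℕ),
      ((C / (q ^ m - 1) : ℝ) : EReal) ≤ v (PowerSeries.coeff k (f i)) :=
  stmt3_general v hv_top hv_bot hv_mul hv_add q hq φ hφ m n hm C Δ hΔ f hf
end

section
/- Let p be a prime, q a positive power of p, K a separably closed field of characteristic p, and d ≥ 1 an integer. Let R = K^d with componentwise ring operations and let σ : R → R be the ring endomorphism σ(z_0, …, z_{d−1}) = (z_{d−1}^q, z_0^q, …, z_{d−2}^q); extend σ to the power series ring R[[t]] by applying it to every coefficient. Then for every unit f of R[[t]] there exists a unit s of R[[t]] such that σ(s) = f · s. -/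
/-!
Comparing coefficients of `t^n`, the equation `σ(s) = f * s` reads
`σ(s_n) - f_0 s_n = ∑_{k<n} f_{n-k} s_k`, so `s` can be built degree by degree once every
equation `σ(c) = a c + b` with `a` a unit is solvable, and `σ(c) = a c` has a unit solution.
Over `K^d` such an equation is a cyclic system `c_{i-1}^q = a_i c_i + b_i`: the equations with
`i ≠ 0` express every `c_i` through `c_0`, and the remaining one becomes
`A c_0^(q^d) - a_0 c_0 + B = 0`, a separable polynomial equation since `q^d = 0` in `K`.
-/
open Finset

namespace PowerSeries

theorem coeff_mul_eq_sum_range {R : Type*} [Semiring R] (f g : R⟦X⟧) (n : ℕ) :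
    coeff n (f * g) = ∑ k ∈ range (n + 1), coeff k f * coeff (n - k) g := by
  rw [coeff_mul, Nat.sum_antidiagonal_eq_sum_range_succ (fun i j => coeff i f * coeff j g)]

variable {R : Type*} [CommRing R]

noncomputable def solveCoeff (f : R⟦X⟧) (c₀ : R) (g : R → R) : ℕ → R
  | 0 => c₀
  | n + 1 => g (∑ k : Fin (n + 1), solveCoeff f c₀ g k * coeff (n + 1 - k) f)

theorem exists_isUnit_map_eq_mul (σ : R →+* R) (f : R⟦X⟧)
    (hunit : ∃ c, IsUnit c ∧ σ c = constantCoeff f * c)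
    (hsolve : ∀ b, ∃ c, σ c = constantCoeff f * c + b) :
    ∃ s, IsUnit s ∧ map σ s = f * s := by
  obtain ⟨c₀, hc₀, hσc₀⟩ := hunit
  choose g hg using hsolve
  refine ⟨mk (solveCoeff f c₀ g), ?_, ?_⟩
  · rwa [isUnit_iff_constantCoeff, ← coeff_zero_eq_constantCoeff_apply, coeff_mk, solveCoeff]
  ext (_ | n)
  · simpa [solveCoeff, mul_comm] using hσc₀
  · rw [coeff_map, mul_comm, coeff_mul_eq_sum_range, sum_range_succ, coeff_mk, solveCoeff, hg,
      ← Fin.sum_univ_eq_sum_range (fun k => coeff k (mk _) * coeff (n + 1 - k) f)]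
    simp [mul_comm, add_comm]

end PowerSeries

theorem Nat.Prime.two_le_pow_pow {p : ℕ} (hp : p.Prime) {e m : ℕ} (he : e ≠ 0)
    (hm : m ≠ 0) :
    2 ≤ (p ^ e) ^ m :=
  hp.two_le.trans (pow_mul p e m ▸ Nat.le_self_pow (Nat.mul_ne_zero he hm) p)

theorem Fin.forall_sub_one_iff {n : ℕ} (P : Fin (n + 1) → Fin (n + 1) → Prop) :
    (∀ i, P (i - 1) i) ↔ P (Fin.last n) 0 ∧ ∀ i : Fin n, P i.castSucc i.succ := by
  have hzero : (0 : Fin (n + 1)) - 1 = Fin.last n := by ext; simp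
  have hsucc (i : Fin n) : i.succ - 1 = i.castSucc := by ext; simp [Fin.coe_sub_one]
  refine ⟨fun h => ⟨hzero ▸ h 0, fun i => hsucc i ▸ h i.succ⟩, fun ⟨h0, hs⟩ i => ?_⟩
  cases i using Fin.cases with
  | zero => rwa [hzero]
  | succ i => rw [hsucc]; exact hs i

namespace FrobeniusCycle

variable {K : Type*} [Field K] {n : ℕ}

/-- Starting from `x`, solve the equations `y (i-1) ^ q = a i * y i + b i` for `i ≠ 0` forward;
only the equation at `i = 0` is left. -/
def chain (q : ℕ) (a b : Fin (n + 1) → K) (x : K) : Fin (n + 1) → K :=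
  Fin.induction x fun i y => (y ^ q - b i.succ) / a i.succ

variable {q : ℕ} {a b : Fin (n + 1) → K}

@[simp]
theorem chain_zero (x : K) : chain q a b x 0 = x := rfl

theorem chain_succ (x : K) (i : Fin n) :
    chain q a b x i.succ = (chain q a b x i.castSucc ^ q - b i.succ) / a i.succ :=
  Fin.induction_succ ..

theorem chain_castSucc_pow (ha : ∀ i, a i ≠ 0) (x : K) (i : Fin n) :
    chain q a b x i.castSucc ^ q = a i.succ * chain q a b x i.succ + b i.succ := by
  rw [chain_succ, mul_div_cancel₀ _ (ha _), sub_add_cancel]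

theorem exists_chain_eq {p e : ℕ} [Fact p.Prime] [CharP K p] (ha : ∀ i, a i ≠ 0)
    (i : Fin (n + 1)) :
    ∃ A ≠ 0, ∃ B, ∀ x, chain (p ^ e) a b x i = A * x ^ (p ^ e) ^ (i : ℕ) + B := by
  induction i using Fin.induction with
  | zero => exact ⟨1, one_ne_zero, 0, fun x => by simp⟩
  | succ i ih =>
    obtain ⟨A, hA, B, hAB⟩ := ih
    refine ⟨A ^ p ^ e / a i.succ, div_ne_zero (pow_ne_zero _ hA) (ha _),
      (B ^ p ^ e - b i.succ) / a i.succ, fun x => ?_⟩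
    rw [chain_succ, hAB, add_pow_char_pow, mul_pow, ← pow_mul, Fin.val_succ, Fin.val_castSucc,
      pow_succ]
    ring

theorem chain_ne_zero (ha : ∀ i, a i ≠ 0) {x : K} (hx : x ≠ 0) (i : Fin (n + 1)) :
    chain q a 0 x i ≠ 0 := by
  induction i using Fin.induction with
  | zero => exact hx
  | succ i ih =>
    rw [chain_succ, Pi.zero_apply, sub_zero]
    exact div_ne_zero (pow_ne_zero _ ih) (ha _)

theorem chain_zero_zero (hq : q ≠ 0) (i : Fin (n + 1)) : chain q a 0 0 i = 0 := by
  induction i using Fin.induction with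
  | zero => rfl
  | succ i ih => rw [chain_succ, ih, Pi.zero_apply, zero_pow hq, sub_zero, zero_div]

variable {p e : ℕ} [Fact p.Prime] [CharP K p]

theorem exists_chain_last_pow (ha : ∀ i, a i ≠ 0) :
    ∃ A ≠ 0, ∃ B, ∀ x,
      chain (p ^ e) a b x (Fin.last n) ^ p ^ e = A * x ^ (p ^ e) ^ (n + 1) + B := by
  obtain ⟨A, hA, B, hAB⟩ := exists_chain_eq (p := p) (e := e) (b := b) ha (Fin.last n)
  refine ⟨A ^ p ^ e, pow_ne_zero _ hA, B ^ p ^ e, fun x => ?_⟩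
  rw [hAB, add_pow_char_pow, mul_pow, ← pow_mul, Fin.val_last, pow_succ]

end FrobeniusCycle

open FrobeniusCycle

section

variable {K : Type*} [Field K] {n : ℕ}

theorem cyclicFrobenius_eq_mul_add_iff {q : ℕ} {σ : (Fin (n + 1) → K) → Fin (n + 1) → K}
    (hσ : ∀ z i, σ z i = z (i - 1) ^ q) (a b c : Fin (n + 1) → K) :
    σ c = a * c + b ↔
      c (Fin.last n) ^ q = a 0 * c 0 + b 0 ∧
        ∀ i : Fin n, c i.castSucc ^ q = a i.succ * c i.succ + b i.succ := by
  simp only [funext_iff, hσ, Pi.add_apply, Pi.mul_apply]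
  exact Fin.forall_sub_one_iff fun j i => c j ^ q = a i * c i + b i

variable {p e : ℕ} [Fact p.Prime] [CharP K p] [IsSepClosed K]
  {σ : (Fin (n + 1) → K) → Fin (n + 1) → K}

theorem exists_cyclicFrobenius_eq_mul_add (he : e ≠ 0) (hσ : ∀ z i, σ z i = z (i - 1) ^ p ^ e)
    {a : Fin (n + 1) → K} (ha : IsUnit a) (b : Fin (n + 1) → K) : ∃ c, σ c = a * c + b := by
  have ha' i : a i ≠ 0 := (Pi.isUnit_iff.mp ha i).ne_zero
  obtain ⟨A, -, B, hAB⟩ := exists_chain_last_pow (p := p) (e := e) (b := b) ha'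
  obtain ⟨x, hx⟩ := IsSepClosed.exists_root_C_mul_X_pow_add_C_mul_X_add_C' p ((p ^ e) ^ (n + 1))
    A (-a 0) (B - b 0) (dvd_pow (dvd_pow_self p he) n.succ_ne_zero)
    ((Fact.out : p.Prime).two_le_pow_pow he n.succ_ne_zero) (neg_ne_zero.mpr (ha' 0))
  refine ⟨chain (p ^ e) a b x, (cyclicFrobenius_eq_mul_add_iff hσ _ _ _).mpr
    ⟨?_, chain_castSucc_pow ha' x⟩⟩
  rw [hAB, chain_zero]
  linear_combination hx

theorem exists_isUnit_cyclicFrobenius_eq_mul (he : e ≠ 0)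
    (hσ : ∀ z i, σ z i = z (i - 1) ^ p ^ e)
    {a : Fin (n + 1) → K} (ha : IsUnit a) : ∃ c, IsUnit c ∧ σ c = a * c := by
  have ha' i : a i ≠ 0 := (Pi.isUnit_iff.mp ha i).ne_zero
  have hp : p.Prime := Fact.out
  have hq : p ^ e ≠ 0 := pow_ne_zero _ hp.ne_zero
  obtain ⟨A, hA, B, hAB⟩ := exists_chain_last_pow (p := p) (e := e) (b := 0) ha'
  set N := (p ^ e) ^ (n + 1)
  have hN : 2 ≤ N := hp.two_le_pow_pow he n.succ_ne_zero
  have hB : B = 0 := by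
    simpa [chain_zero_zero hq, zero_pow hq, zero_pow (show N ≠ 0 by omega)] using (hAB 0).symm
  have : NeZero ((N - 1 : ℕ) : K) := ⟨by
    rw [Nat.cast_sub (by omega), CharP.cast_eq_zero_iff K p _ |>.mpr
      (dvd_pow (dvd_pow_self p he) n.succ_ne_zero)]
    simp⟩
  obtain ⟨x, hx⟩ := IsSepClosed.exists_pow_nat_eq (a 0 / A) (N - 1)
  have hx0 : x ≠ 0 := by
    rintro rfl
    rw [zero_pow (by omega)] at hx
    exact div_ne_zero (ha' 0) hA hx.symm
  have hwrap : chain (p ^ e) a 0 x (Fin.last n) ^ p ^ e = a 0 * x + (0 : Fin (n + 1) → K) 0 := by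
    rw [hAB, hB, Pi.zero_apply, add_zero, add_zero, ← Nat.sub_add_cancel (by omega : 1 ≤ N),
      pow_succ, hx]
    field_simp
  refine ⟨chain (p ^ e) a 0 x, Pi.isUnit_iff.mpr fun i => (chain_ne_zero ha' hx0 i).isUnit, ?_⟩
  rw [← add_zero (a * _)]
  exact (cyclicFrobenius_eq_mul_add_iff hσ a 0 _).mpr ⟨hwrap, chain_castSucc_pow ha' x⟩

end

/-- **Every unit power series is a `σ`-quotient `σ(s)/s`** (Lemma 6.8 of the paper).
Let `p` be a prime, `q = p^e` a positive power of `p`, `K` a separably closed field of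
characteristic `p`, and `d ≥ 1`.  Let `R = K^d` and let `σ : R → R` be the ring endomorphism
`σ (z_0, …, z_{d-1}) = (z_{d-1}^q, z_0^q, …, z_{d-2}^q)`, extended coefficientwise to `R[[t]]`.
Then for every unit `f` of `R[[t]]` there is a unit `s` of `R[[t]]` with `σ(s) = f * s`. -/
theorem stmt4 (p : ℕ) [Fact p.Prime] (e : ℕ) (he : 1 ≤ e)
    {K : Type*} [Field K] [CharP K p] [IsSepClosed K]
    (d : ℕ) [NeZero d]
    (σ : (Fin d → K) →+* (Fin d → K))
    (hσ : ∀ (z : Fin d → K) (i : Fin d), σ z i = z (i - 1) ^ p ^ e)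
    (f : PowerSeries (Fin d → K)) (hf : IsUnit f) :
    ∃ s : PowerSeries (Fin d → K), IsUnit s ∧ PowerSeries.map σ s = f * s := by
  obtain ⟨n, rfl⟩ := Nat.exists_eq_add_one_of_ne_zero (NeZero.ne d)
  have he : e ≠ 0 := by omega
  have hf₀ := hf.map PowerSeries.constantCoeff
  exact PowerSeries.exists_isUnit_map_eq_mul σ f
    (exists_isUnit_cyclicFrobenius_eq_mul he hσ hf₀)
    (exists_cyclicFrobenius_eq_mul_add he hσ hf₀)
end

section
/- Let L be a field with an additive valuation v, and let q ≥ 2 and N ≥ 0 be integers. Let s = ∑_{i≥0} s_i t^i be a formal power series over L with s_0 ≠ 0, v(s_i) ≥ 0 for all i, and v(s_0) < q^N. Let b = ∑_{i≥0} b_i t^i be a formal power series over L such that for every i, either b_i = 0 or v(b_i) is an integer multiple of q^N. If c is an integer such that c · q^N ≤ v((s·b)_i) for every coefficient (s·b)_i of the product s·b (with the convention v(0) = ∞), then c · q^N ≤ v(b_i) for all i. -/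
/-!
Induct on `i`. Isolating the term `s₀ bᵢ` of `(s b)ᵢ = ∑ sⱼ b_{i-j}`, the ultrametric inequality and
`v (sⱼ) ≥ 0` give `c qᴺ ≤ v (s₀) + v (bᵢ)`. If `bᵢ ≠ 0` then `v (bᵢ) = k qᴺ` with `k` an integer, and
`0 ≤ v (s₀) < qᴺ` forces `c < k + 1`, i.e. `c qᴺ ≤ k qᴺ`.
-/

open PowerSeries

theorem Int.mul_le_mul_of_le_add_of_lt {c k : ℤ} {r Q : ℝ} (hr : 0 ≤ r) (hrQ : r < Q)
    (h : c * Q ≤ r + k * Q) : c * Q ≤ k * Q := by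
  have hQ : 0 < Q := hr.trans_lt hrQ
  have hck : (c : ℝ) < k + 1 := by nlinarith
  have : c ≤ k := Int.lt_add_one_iff.mp (by exact_mod_cast hck)
  exact mul_le_mul_of_nonneg_right (by exact_mod_cast this) hQ.le

theorem PowerSeries.coeff_mul_eq_sum_add_coeff_zero_mul {R : Type*} [Semiring R]
    (s b : PowerSeries R) (i : ℕ) :
    coeff i (s * b) =
      ∑ j ∈ Finset.range i, coeff (j + 1) s * coeff (i - (j + 1)) b + coeff 0 s * coeff i b := by
  rw [coeff_mul, Finset.Nat.sum_antidiagonal_eq_sum_range_succ (fun j l => coeff j s * coeff l b),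
    Finset.sum_range_succ', Nat.sub_zero]

section AdditiveValuation

variable {L : Type*} [Field L] {v : L → EReal}
  (hv_top : ∀ x : L, v x = ⊤ ↔ x = 0)
  (hv_add : ∀ x y : L, min (v x) (v y) ≤ v (x + y))

include hv_top hv_add in
theorem le_val_sum {ι : Type*} {M : EReal} (t : Finset ι) (f : ι → L)
    (h : ∀ x ∈ t, M ≤ v (f x)) : M ≤ v (∑ x ∈ t, f x) := by
  classical
  induction t using Finset.cons_induction with
  | empty => simp [(hv_top 0).mpr rfl]
  | cons a t ha ih =>
    rw [Finset.sum_cons]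
    exact (le_min (h a (t.mem_cons_self a))
      (ih fun x hx => h x (Finset.mem_cons_of_mem hx))).trans (hv_add _ _)

variable (hv_bot : ∀ x : L, v x ≠ ⊥) (hv_mul : ∀ x y : L, v (x * y) = v x + v y)

include hv_top hv_bot hv_mul in
theorem val_one : v 1 = 0 := by
  have h := hv_mul 1 1
  rw [mul_one] at h
  lift v 1 to ℝ using ⟨by simp [hv_top], hv_bot 1⟩ with r
  norm_cast at h ⊢
  linarith

include hv_top hv_bot hv_mul in
theorem val_neg (x : L) : v (-x) = v x := by
  have h := hv_mul (-1) (-1)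
  rw [neg_mul_neg, one_mul, val_one hv_top hv_bot hv_mul] at h
  have hneg_one : v (-1 : L) = 0 := by
    lift v (-1 : L) to ℝ using ⟨by simp [hv_top], hv_bot _⟩ with r
    norm_cast at h ⊢
    linarith
  rw [← neg_one_mul, hv_mul, hneg_one, zero_add]

include hv_top hv_add hv_bot hv_mul in
theorem le_val_coeff_zero_mul_coeff {s b : PowerSeries L} {M : EReal} {i : ℕ}
    (hs : ∀ j, 0 ≤ v (coeff j s)) (hsb : M ≤ v (coeff i (s * b)))
    (hb : ∀ j < i, M ≤ v (coeff j b)) : M ≤ v (coeff 0 s * coeff i b) := by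
  rw [eq_sub_of_add_eq' (coeff_mul_eq_sum_add_coeff_zero_mul s b i).symm, sub_eq_add_neg]
  refine (le_min hsb ?_).trans (hv_add _ _)
  rw [val_neg hv_top hv_bot hv_mul]
  refine le_val_sum hv_top hv_add _ _ fun j hj => ?_
  rw [hv_mul, ← zero_add M]
  exact add_le_add (hs _) (hb _ (by simp at hj; omega))

end AdditiveValuation

theorem stmt5_general {L : Type*} [Field L] (v : L → EReal)
    (hv_top : ∀ x : L, v x = ⊤ ↔ x = 0)
    (hv_bot : ∀ x : L, v x ≠ ⊥)
    (hv_mul : ∀ x y : L, v (x * y) = v x + v y)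
    (hv_add : ∀ x y : L, min (v x) (v y) ≤ v (x + y))
    (q N : ℕ)
    (s b : PowerSeries L)
    (hs0 : PowerSeries.coeff (R := L) 0 s ≠ 0)
    (hs_nonneg : ∀ i : ℕ, (0 : EReal) ≤ v (PowerSeries.coeff (R := L) i s))
    (hs0_lt : v (PowerSeries.coeff (R := L) 0 s) < (((q : ℝ) ^ N : ℝ) : EReal))
    (hb : ∀ i : ℕ, PowerSeries.coeff (R := L) i b = 0 ∨
      ∃ k : ℤ, v (PowerSeries.coeff (R := L) i b) = (((k : ℝ) * (q : ℝ) ^ N : ℝ) : EReal))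
    (c : ℤ)
    (hc : ∀ i : ℕ,
      (((c : ℝ) * (q : ℝ) ^ N : ℝ) : EReal) ≤ v (PowerSeries.coeff (R := L) i (s * b))) :
    ∀ i : ℕ, (((c : ℝ) * (q : ℝ) ^ N : ℝ) : EReal) ≤ v (PowerSeries.coeff (R := L) i b) := by
  intro i
  induction i using Nat.strong_induction_on with
  | _ i ih =>
  rcases hb i with hbi | ⟨k, hk⟩
  · simp [hbi, (hv_top 0).mpr rfl]
  have hstep := le_val_coeff_zero_mul_coeff hv_top hv_add hv_bot hv_mul hs_nonneg (hc i) ih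
  have hs0_nonneg := hs_nonneg 0
  rw [hv_mul, hk] at hstep
  rw [hk]
  lift v (coeff 0 s) to ℝ using ⟨by simpa [hv_top] using hs0, hv_bot _⟩ with r
  rw [← EReal.coe_add, EReal.coe_le_coe_iff] at hstep
  rw [EReal.coe_nonneg] at hs0_nonneg
  rw [EReal.coe_lt_coe_iff] at hs0_lt
  rw [EReal.coe_le_coe_iff]
  exact Int.mul_le_mul_of_le_add_of_lt hs0_nonneg hs0_lt hstep

/-- **Key lemma on valuations of coefficients of a product of power series**
(following Tamagawa).  Let `L` be a field with an additive valuation `v`, and `q ≥ 2`,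
`N ≥ 0` integers.  Let `s` be a power series with `s_0 ≠ 0`, `v (s_i) ≥ 0` for all `i` and
`v (s_0) < q^N`; let `b` be a power series each of whose nonzero coefficients has valuation an
integer multiple of `q^N`.  If `c` is an integer with `c * q^N ≤ v ((s * b)_i)` for every
coefficient of the product `s * b`, then `c * q^N ≤ v (b_i)` for all `i`. -/
theorem stmt5 {L : Type*} [Field L] (v : L → EReal)
    (hv_top : ∀ x : L, v x = ⊤ ↔ x = 0)
    (hv_bot : ∀ x : L, v x ≠ ⊥)
    (hv_mul : ∀ x y : L, v (x * y) = v x + v y)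
    (hv_add : ∀ x y : L, min (v x) (v y) ≤ v (x + y))
    (q N : ℕ) (hq : 2 ≤ q)
    (s b : PowerSeries L)
    (hs0 : PowerSeries.coeff (R := L) 0 s ≠ 0)
    (hs_nonneg : ∀ i : ℕ, (0 : EReal) ≤ v (PowerSeries.coeff (R := L) i s))
    (hs0_lt : v (PowerSeries.coeff (R := L) 0 s) < (((q : ℝ) ^ N : ℝ) : EReal))
    (hb : ∀ i : ℕ, PowerSeries.coeff (R := L) i b = 0 ∨
      ∃ k : ℤ, v (PowerSeries.coeff (R := L) i b) = (((k : ℝ) * (q : ℝ) ^ N : ℝ) : EReal))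
    (c : ℤ)
    (hc : ∀ i : ℕ,
      (((c : ℝ) * (q : ℝ) ^ N : ℝ) : EReal) ≤ v (PowerSeries.coeff (R := L) i (s * b))) :
    ∀ i : ℕ, (((c : ℝ) * (q : ℝ) ^ N : ℝ) : EReal) ≤ v (PowerSeries.coeff (R := L) i b) :=
  stmt5_general v hv_top hv_bot hv_mul hv_add q N s b hs0 hs_nonneg hs0_lt hb c hc
end

section
/- Let p be a prime and q a power of p. If f_1, …, f_m ∈ 𝔽_q[[t]] are linearly independent over the subfield 𝔽_q(t) of the Laurent series field 𝔽_q((t)), then f_1^p, …, f_m^p are also linearly independent over 𝔽_q(t). -/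
/-!
Over a perfect ring of characteristic `p`, every polynomial is `∑_{j<p} X^j d_j^p`. So a relation
`∑ c_i f_i^p = 0` with polynomial coefficients rewrites as `∑_{j<p} t^j g_j^p = 0` with
`g_j = ∑_i d_{ij} f_i`. The nonzero terms `t^j g_j^p` have orders `j + p·ord g_j`, pairwise
distinct modulo `p`, so no cancellation is possible and every `g_j` vanishes; independence of
the `f_i` then kills every `d_{ij}`, hence every `c_i`. Clearing denominators passes between
`𝔽_q[t]` and `𝔽_q(t)`.
-/

open scoped RatFunc

open Polynomial HahnSeries

theorem HahnSeries.eq_zero_of_sum_eq_zero_of_injOn_order {Γ R ι : Type*} [LinearOrder Γ] [Zero Γ]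
    [AddCommMonoid R] {s : Finset ι} {x : ι → R⟦Γ⟧}
    (hx : Set.InjOn (fun i => (x i).order) {i | i ∈ s ∧ x i ≠ 0})
    (hsum : ∑ i ∈ s, x i = 0) : ∀ i ∈ s, x i = 0 := by
  classical
  by_contra! ⟨i, hi, hxi⟩
  obtain ⟨i₀, hi₀, hmin⟩ := (s.filter (x · ≠ 0)).exists_min_image (fun i => (x i).order)
    ⟨i, Finset.mem_filter.2 ⟨hi, hxi⟩⟩
  rw [Finset.mem_filter] at hi₀
  have hcoeff : (∑ i ∈ s, x i).coeff (x i₀).order = (x i₀).coeff (x i₀).order := by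
    rw [coeff_sum, Finset.sum_eq_single_of_mem i₀ hi₀.1]
    intro j hj hji₀
    by_cases hxj : x j = 0
    · rw [hxj, coeff_zero]
    refine coeff_eq_zero_of_lt_order (lt_of_le_of_ne (hmin j (Finset.mem_filter.2 ⟨hj, hxj⟩)) ?_)
    exact fun h => hji₀ (hx ⟨hj, hxj⟩ hi₀ h.symm)
  rw [hsum, coeff_zero, eq_comm, coeff_order_eq_zero] at hcoeff
  exact hi₀.2 hcoeff

theorem Polynomial.exists_eq_sum_X_pow_mul_pow {R : Type*} [CommSemiring R] (p : ℕ) [ExpChar R p]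
    [PerfectRing R p] (f : R[X]) : ∃ d : ℕ → R[X], f = ∑ j ∈ Finset.range p, X ^ j * d j ^ p := by
  have hp : 0 < p := expChar_pos R p
  induction f using Polynomial.induction_on' with
  | add f g hf hg =>
    obtain ⟨d, rfl⟩ := hf
    obtain ⟨d', rfl⟩ := hg
    refine ⟨d + d', ?_⟩
    simp only [Pi.add_apply, add_pow_expChar, mul_add, Finset.sum_add_distrib]
  | monomial n a =>
    refine ⟨Pi.single (n % p) (monomial (n / p) ((frobeniusEquiv R p).symm a)), ?_⟩
    rw [Finset.sum_eq_single_of_mem (n % p) (Finset.mem_range.2 (Nat.mod_lt _ hp))]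
    · rw [Pi.single_eq_same, monomial_pow, frobeniusEquiv_symm_pow_p, X_pow_eq_monomial,
        monomial_mul_monomial, one_mul, Nat.mod_add_div']
    · intro j _ hj
      rw [Pi.single_eq_of_ne hj, zero_pow hp.ne', mul_zero]

namespace LaurentSeries

variable {R : Type*} [CommRing R] [IsDomain R]

theorem eq_zero_of_sum_X_pow_smul_pow_eq_zero {p : ℕ} {g : ℕ → R⸨X⸩}
    (h : ∑ j ∈ Finset.range p, (X ^ j : R[X]) • g j ^ p = 0) : ∀ j < p, g j = 0 := by
  have hterm : ∀ j : ℕ, (X ^ j : R[X]) • g j ^ p = single (j : ℤ) 1 * g j ^ p := fun j => by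
    rw [Algebra.smul_def, algebraMap_hahnSeries_apply, coe_pow, coe_X, map_pow, ofPowerSeries_X,
      single_pow, one_pow, nsmul_one]
  simp only [hterm] at h
  have hord : ∀ j ∈ Finset.range p, single (j : ℤ) 1 * g j ^ p ≠ 0 →
      (single (j : ℤ) (1 : R) * g j ^ p).order % p = j := by
    intro j hj hne
    have hg : g j ^ p ≠ 0 := fun h0 => hne (by rw [h0, mul_zero])
    rw [order_single_mul_of_isRegular isRegular_one hg, order_pow, nsmul_eq_mul,
      Int.add_mul_emod_self_left]
    exact Int.emod_eq_of_lt (by positivity) (by exact_mod_cast Finset.mem_range.1 hj)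
  have hinj : Set.InjOn (fun j : ℕ => (single (j : ℤ) (1 : R) * g j ^ p).order)
      {j : ℕ | j ∈ Finset.range p ∧ single (j : ℤ) 1 * g j ^ p ≠ 0} := by
    intro j hj j' hj' hjj'
    exact_mod_cast (hord j hj.1 hj.2).symm.trans
      ((congrArg (· % (p : ℤ)) hjj').trans (hord j' hj'.1 hj'.2))
  intro j hj
  have hterm_zero := eq_zero_of_sum_eq_zero_of_injOn_order hinj h j (Finset.mem_range.2 hj)
  rw [mul_eq_zero, or_iff_right (single_ne_zero one_ne_zero),
    pow_eq_zero_iff (Nat.zero_lt_of_lt hj).ne'] at hterm_zero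
  exact hterm_zero

theorem linearIndependent_pow (p : ℕ) [ExpChar R p] [PerfectRing R p] {ι : Type*}
    {v : ι → R⸨X⸩} (hv : LinearIndependent R[X] v) :
    LinearIndependent R[X] (fun i => v i ^ p) := by
  have : ExpChar R⸨X⸩ p := expChar_of_injective_ringHom HahnSeries.C_injective p
  rw [linearIndependent_iff'] at hv ⊢
  intro s c hc i hi
  choose d hd using fun i => exists_eq_sum_X_pow_mul_pow p (c i)
  have hsum : ∑ j ∈ Finset.range p, (X ^ j : R[X]) • (∑ i ∈ s, d i j • v i) ^ p =
      ∑ i ∈ s, c i • v i ^ p := by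
    simp_rw [sum_pow_char, _root_.smul_pow, Finset.smul_sum, ← mul_smul]
    rw [Finset.sum_comm]
    refine Finset.sum_congr rfl fun i _ => ?_
    rw [hd i, Finset.sum_smul]
  have hg := eq_zero_of_sum_X_pow_smul_pow_eq_zero (hsum.trans hc)
  rw [hd i]
  refine Finset.sum_eq_zero fun j hj => ?_
  rw [hv s (fun i => d i j) (hg j (Finset.mem_range.1 hj)) i hi, zero_pow (expChar_ne_zero R p),
    mul_zero]

end LaurentSeries

theorem stmt6_general (p : ℕ) [Fact p.Prime] (e : ℕ)
    {K : Type*} [Field K] [Fintype K] (hK : Fintype.card K = p ^ e)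
    (m : ℕ) (f : Fin m → PowerSeries K)
    (hf : LinearIndependent (RatFunc K)
      (fun i : Fin m => (HahnSeries.ofPowerSeries ℤ K (f i) : LaurentSeries K))) :
    LinearIndependent (RatFunc K)
      (fun i : Fin m => (HahnSeries.ofPowerSeries ℤ K (f i ^ p) : LaurentSeries K)) := by
  have : CharP K p := charP_of_card_eq_prime_pow hK
  simp only [map_pow]
  rw [← LinearIndependent.iff_fractionRing K[X] (RatFunc K)] at hf ⊢
  exact LaurentSeries.linearIndependent_pow p hf

/-- **Linear independence over `𝔽_q(t)` is preserved by `p`-th powers.**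
Let `p` be a prime and `q` a power of `p`, and let `K` be the finite field with `q` elements.
If `f_1, …, f_m ∈ K[[t]]` are linearly independent over `K(t)` (inside the Laurent series
field `K((t))`), then so are `f_1^p, …, f_m^p`. -/
theorem stmt6 (p : ℕ) [Fact p.Prime] (e : ℕ) (he : 1 ≤ e)
    {K : Type*} [Field K] [Fintype K] (hK : Fintype.card K = p ^ e)
    (m : ℕ) (f : Fin m → PowerSeries K)
    (hf : LinearIndependent (RatFunc K)
      (fun i : Fin m => (HahnSeries.ofPowerSeries ℤ K (f i) : LaurentSeries K))) :
    LinearIndependent (RatFunc K)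
      (fun i : Fin m => (HahnSeries.ofPowerSeries ℤ K (f i ^ p) : LaurentSeries K)) :=
  stmt6_general p e hK m f hf
end

section
/- Let F ⊆ Q be fields and let Q(X) be the field of rational functions over Q. The Q-subalgebra of Q(X) generated by the subfield F(X) (equivalently, the image of the canonical map F(X) ⊗_F Q → Q(X)) consists exactly of those f ∈ Q(X) whose denominator denom(f) divides, in Q[X], some nonzero polynomial g ∈ F[X]. -/
/-! `F(X)` contains `X` and `1/g` for every nonzero `g ∈ F[X]`, so the `Q`-algebra it generates
contains `p / g` for all `p ∈ Q[X]`. Conversely, the denominator of an element of `F(X)` is a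
nonzero element of `F[X]`, and since `denom (x + y)` and `denom (x * y)` divide
`denom x * denom y`, the fractions whose denominators divide nonzero elements of `F[X]` form a `Q`-subalgebra. -/

open Polynomial
open scoped nonZeroDivisors RatFunc

namespace RatFunc

variable {K : Type*} [Field K]

def denomDvdSubalgebra (S : Submonoid K[X]) : Subalgebra K K⟮X⟯ where
  carrier := {f | ∃ s ∈ S, f.denom ∣ s}
  mul_mem' := by
    rintro f g ⟨s, hs, hf⟩ ⟨t, ht, hg⟩
    exact ⟨s * t, S.mul_mem hs ht, (denom_mul_dvd f g).trans (mul_dvd_mul hf hg)⟩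
  add_mem' := by
    rintro f g ⟨s, hs, hf⟩ ⟨t, ht, hg⟩
    exact ⟨s * t, S.mul_mem hs ht, (denom_add_dvd f g).trans (mul_dvd_mul hf hg)⟩
  algebraMap_mem' c := ⟨1, S.one_mem, by
    rw [IsScalarTower.algebraMap_apply K K[X] K⟮X⟯, denom_algebraMap]⟩

theorem mem_denomDvdSubalgebra {S : Submonoid K[X]} {f : K⟮X⟯} :
    f ∈ denomDvdSubalgebra S ↔ ∃ s ∈ S, f.denom ∣ s :=
  Iff.rfl

theorem algebraMap_mem_of_X_mem {A : Subalgebra K K⟮X⟯} (hX : X ∈ A) (p : K[X]) :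
    algebraMap K[X] K⟮X⟯ p ∈ A := by
  have hp : aeval (X : K⟮X⟯) p = algebraMap K[X] K⟮X⟯ p := by
    rw [← algebraMap_X, aeval_algebraMap_apply, aeval_X_left_apply]
  rw [← hp]
  exact Algebra.adjoin_le (Set.singleton_subset_iff.mpr hX) (aeval_mem_adjoin_singleton K _)

theorem mem_of_denom_dvd {A : Subalgebra K K⟮X⟯} (hX : X ∈ A) {q : K[X]}
    (hq : (algebraMap K[X] K⟮X⟯ q)⁻¹ ∈ A) (hq0 : q ≠ 0) {f : K⟮X⟯} (hf : f.denom ∣ q) :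
    f ∈ A := by
  obtain ⟨h, rfl⟩ := hf
  have hfrac : f = algebraMap K[X] K⟮X⟯ (f.num * h) * (algebraMap K[X] K⟮X⟯ (f.denom * h))⁻¹ := by
    have hh : algebraMap K[X] K⟮X⟯ h ≠ 0 :=
      algebraMap_ne_zero (right_ne_zero_of_mul hq0)
    rw [map_mul, map_mul, mul_inv, mul_mul_mul_comm, mul_inv_cancel₀ hh, mul_one,
      ← div_eq_mul_inv, num_div_denom]
  rw [hfrac]
  exact mul_mem (algebraMap_mem_of_X_mem hX _) hq

variable {L G : Type*} [Field L] [FunLike G K[X] L[X]]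

theorem map_algebraMap [MonoidWithZeroHomClass G K[X] L[X]] (φ : G)
    (hφ : K[X]⁰ ≤ L[X]⁰.comap φ) (p : K[X]) :
    map φ hφ (algebraMap K[X] K⟮X⟯ p) = algebraMap L[X] L⟮X⟯ (φ p) := by
  simpa using map_apply_div φ hφ p 1

theorem denom_map_dvd [MonoidHomClass G K[X] L[X]] (φ : G) (hφ : K[X]⁰ ≤ L[X]⁰.comap φ)
    (f : K⟮X⟯) : (map φ hφ f).denom ∣ φ f.denom := by
  rw [map_apply]
  exact denom_div_dvd _ _

theorem map_mem_denomDvdSubalgebra [MonoidHomClass G K[X] L[X]] (φ : G)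
    (hφ : K[X]⁰ ≤ L[X]⁰.comap φ) (f : K⟮X⟯) :
    map φ hφ f ∈ denomDvdSubalgebra (K[X]⁰.map φ) :=
  ⟨φ f.denom, Submonoid.mem_map_of_mem φ (mem_nonZeroDivisors_of_ne_zero (denom_ne_zero f)),
    denom_map_dvd φ hφ f⟩

end RatFunc

/-- **Characterisation of `F(X) ⊗_F Q` inside `Q(X)` via denominators.**
Let `F ⊆ Q` be fields.  The `Q`-subalgebra of `Q(X)` generated by the subfield `F(X)`
(the image of the canonical map `F(X) ⊗_F Q → Q(X)`) consists exactly of those `f ∈ Q(X)`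
whose (monic) denominator divides, in `Q[X]`, some nonzero polynomial with coefficients
in `F`. -/
theorem stmt8 {F Q : Type*} [Field F] [Field Q] [Algebra F Q] (f : RatFunc Q) :
    f ∈ Algebra.adjoin Q
        (Set.range (RatFunc.mapRingHom (Polynomial.mapRingHom (algebraMap F Q))
          (fun x hx => by
            simpa only [Submonoid.mem_comap, Polynomial.coe_mapRingHom,
              mem_nonZeroDivisors_iff_ne_zero] using
              (Polynomial.map_ne_zero_iff (algebraMap F Q).injective).mpr
                (mem_nonZeroDivisors_iff_ne_zero.mp hx)) : RatFunc F → RatFunc Q)) ↔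
      ∃ g : Polynomial F, g ≠ 0 ∧ f.denom ∣ g.map (algebraMap F Q) := by
  constructor
  · intro hf
    rw [RatFunc.coe_mapRingHom_eq_coe_map] at hf
    obtain ⟨_, ⟨g, hg, rfl⟩, hdvd⟩ := RatFunc.mem_denomDvdSubalgebra.mp <|
      Algebra.adjoin_le (Set.range_subset_iff.mpr (RatFunc.map_mem_denomDvdSubalgebra _ _)) hf
    exact ⟨g, nonZeroDivisors.ne_zero hg, hdvd⟩
  · rintro ⟨g, hg, hdvd⟩
    have hg' : g.map (algebraMap F Q) ≠ 0 :=
      (Polynomial.map_ne_zero_iff (algebraMap F Q).injective).mpr hg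
    refine RatFunc.mem_of_denom_dvd ?_ ?_ hg' hdvd
    · refine Algebra.subset_adjoin ⟨RatFunc.X, ?_⟩
      rw [← RatFunc.algebraMap_X, RatFunc.coe_mapRingHom_eq_coe_map, RatFunc.map_algebraMap,
        coe_mapRingHom, map_X, RatFunc.algebraMap_X]
    · refine Algebra.subset_adjoin ⟨(algebraMap F[X] F⟮X⟯ g)⁻¹, ?_⟩
      rw [map_inv₀, RatFunc.coe_mapRingHom_eq_coe_map, RatFunc.map_algebraMap, coe_mapRingHom]
end

section
/- Let Q be a field, φ : Q → Q a ring endomorphism, and M a nonzero finite-dimensional Q-vector space equipped with a φ-semilinear endomorphism τ : M → M such that the Q-span of τ(M) equals M. Assume (M, τ) is simple: the only Q-subspaces N ⊆ M with τ(N) ⊆ N are 0 and M. Let φ̂ be the ring endomorphism of Q(X) extending φ with φ̂(X) = X, and equip M' := Q(X) ⊗_Q M with the φ̂-semilinear endomorphism τ' determined by τ'(g ⊗ m) = φ̂(g) ⊗ τ(m). Then (M', τ') is simple: the only Q(X)-subspaces of M' stable under τ' are 0 and M'. -/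
/-!
Inside `Q(X) ⊗ M` sits the polynomial module `M[X] ≅ Q[X] ⊗ M`. Since `ψ` fixes `X`, `τ'` acts on
`M[X]` coefficientwise through `τ`, so for a `τ'`-stable subspace `N` the degree-`d` coefficients
of the elements of `N ∩ M[X]` of degree at most `d` form a `τ`-stable subspace of `M`. If `N ≠ 0`,
clearing denominators makes this subspace nonzero for some `d`, so it is all of `M`. Lifting a
basis of `M` gives `dim M` elements of `N` of degree `≤ d` whose degree-`d` coefficients are
independent; such elements are independent over `Q[X]`, hence over `Q(X)`, so they span.
-/

open TensorProduct Polynomial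

noncomputable section

namespace PolynomialModule

variable {R M : Type*} [CommRing R] [AddCommGroup M] [Module R M]

def degreeLE (d : ℕ) : Submodule R (PolynomialModule R M) where
  carrier := {p | ∀ k, d < k → p.coeff k = 0}
  add_mem' hp hq k hk := by simp [hp k hk, hq k hk]
  zero_mem' _ _ := rfl
  smul_mem' r p hp k hk := by
    change coeffLinearEquiv R R (r • p) k = 0
    simp [hp k hk]

variable (R) in
def lcoeff (k : ℕ) : PolynomialModule R M →ₗ[R] M :=
  Finsupp.lapply k ∘ₗ (coeffLinearEquiv R R).toLinearMap

@[simp]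
theorem lcoeff_apply (k : ℕ) (p : PolynomialModule R M) : lcoeff R k p = p.coeff k := rfl

def mapRange (t : M →+ M) : PolynomialModule R M →+ PolynomialModule R M where
  toFun p := ofCoeff R (p.coeff.mapRange t t.map_zero)
  map_zero' := by ext; simp
  map_add' p q := by ext; simp

@[simp]
theorem coeff_mapRange (t : M →+ M) (p : PolynomialModule R M) (k : ℕ) :
    (mapRange t p).coeff k = t (p.coeff k) := rfl

@[simp]
theorem mapRange_single (t : M →+ M) (k : ℕ) (m : M) :
    mapRange t (single R k m) = single R k (t m) :=
  congrArg (ofCoeff R) (Finsupp.mapRange_single ..)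

theorem exists_mem_degreeLE_coeff_ne_zero {p : PolynomialModule R M} (hp : p ≠ 0) :
    ∃ d, p ∈ degreeLE d ∧ p.coeff d ≠ 0 := by
  have hsupp : p.coeff.support.Nonempty :=
    Finsupp.support_nonempty_iff.mpr (coeff_eq_zero.not.mpr hp)
  refine ⟨p.coeff.support.max' hsupp, fun k hk => ?_,
    Finsupp.mem_support_iff.mp (Finset.max'_mem _ _)⟩
  exact Finsupp.notMem_support_iff.mp fun hk' => (Finset.le_max' _ _ hk').not_gt hk

theorem coeff_smul_add_of_natDegree_le {f : R[X]} {p : PolynomialModule R M} {D e : ℕ}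
    (hf : f.natDegree ≤ D) (hp : p ∈ degreeLE e) :
    (f • p).coeff (D + e) = f.coeff D • p.coeff e := by
  rw [smul_apply, Finset.sum_eq_single (D, e)]
  · rintro ⟨a, b⟩ hab hne
    rw [Finset.HasAntidiagonal.mem_antidiagonal] at hab
    rcases lt_or_gt_of_ne (show a ≠ D by rintro rfl; exact hne (by simp_all)) with ha | ha
    · rw [hp b (by omega), smul_zero]
    · rw [coeff_eq_zero_of_natDegree_lt (hf.trans_lt ha), zero_smul]
  · simp

theorem linearIndependent_of_linearIndependent_coeff {ι : Type*}
    {p : ι → PolynomialModule R M} {e : ℕ} (hp : ∀ i, p i ∈ degreeLE e)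
    (hli : LinearIndependent R fun i => (p i).coeff e) :
    LinearIndependent R[X] p := by
  classical
  rw [linearIndependent_iff']
  intro s f hsum i hi
  by_contra hfi
  obtain ⟨i₁, hi₁, hmax⟩ := Finset.exists_max_image (s.filter fun j => f j ≠ 0)
    (fun j => (f j).natDegree) ⟨i, by simp [hi, hfi]⟩
  rw [Finset.mem_filter] at hi₁
  set D := (f i₁).natDegree
  have hdeg : ∀ j ∈ s, (f j).natDegree ≤ D := fun j hj => by
    by_cases hj0 : f j = 0
    · simp [hj0]
    · exact hmax j (by simp [hj, hj0])
  have htop : ∑ j ∈ s, (f j).coeff D • (p j).coeff e = 0 := by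
    have := congrArg (fun q => q.coeff (D + e)) hsum
    simp only [coeff_sum, Finsupp.coe_finsetSum, Finset.sum_apply, coeff_zero,
      Finsupp.coe_zero, Pi.zero_apply] at this
    rwa [Finset.sum_congr rfl fun j hj => coeff_smul_add_of_natDegree_le (hdeg j hj) (hp j)]
      at this
  exact hi₁.2 (leadingCoeff_eq_zero.mp (linearIndependent_iff'.mp hli s _ htop i₁ hi₁.1))

variable {Q : Type*} [Field Q] {M : Type*} [AddCommGroup M] [Module Q M]

def toRatFuncTensor : PolynomialModule Q M →ₗ[Q[X]] RatFunc Q ⊗[Q] M :=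
  AlgebraTensorModule.rTensor Q M (Algebra.linearMap Q[X] (RatFunc Q)) ∘ₗ
    (polynomialTensorProductLEquivPolynomialModule Q M).symm.toLinearMap

@[simp]
theorem toRatFuncTensor_single (k : ℕ) (m : M) :
    toRatFuncTensor (single Q k m) = (RatFunc.X ^ k : RatFunc Q) ⊗ₜ m := by
  simp [toRatFuncTensor, polynomialTensorProductLEquivPolynomialModule, smul_tmul',
    RatFunc.algebraMap_X]

theorem toRatFuncTensor_injective :
    Function.Injective (toRatFuncTensor : PolynomialModule Q M → RatFunc Q ⊗[Q] M) :=
  (Module.Flat.rTensor_preserves_injective_linearMap (M := M)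
    ((Algebra.linearMap Q[X] (RatFunc Q)).restrictScalars Q)
    (RatFunc.algebraMap_injective Q)).comp (LinearEquiv.injective _)

theorem exists_smul_eq_toRatFuncTensor (z : RatFunc Q ⊗[Q] M) :
    ∃ f : Q[X], f ≠ 0 ∧ ∃ p : PolynomialModule Q M, f • z = toRatFuncTensor p := by
  induction z using TensorProduct.induction_on with
  | zero => exact ⟨1, one_ne_zero, 0, by simp⟩
  | tmul g m =>
    have hg : algebraMap Q[X] (RatFunc Q) g.num = g * algebraMap Q[X] (RatFunc Q) g.denom :=
      (div_eq_iff (RatFunc.algebraMap_ne_zero g.denom_ne_zero)).mp (RatFunc.num_div_denom g)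
    refine ⟨g.denom, g.denom_ne_zero, g.num • single Q 0 m, ?_⟩
    rw [_root_.map_smul, toRatFuncTensor_single, pow_zero, smul_tmul', smul_tmul',
      Algebra.smul_def, Algebra.smul_def, mul_one, hg, mul_comm]
  | add x y hx hy =>
    obtain ⟨f₁, hf₁, p₁, hp₁⟩ := hx
    obtain ⟨f₂, hf₂, p₂, hp₂⟩ := hy
    refine ⟨f₁ * f₂, mul_ne_zero hf₁ hf₂, f₂ • p₁ + f₁ • p₂, ?_⟩
    rw [map_add, _root_.map_smul, _root_.map_smul, ← hp₁, ← hp₂, smul_add, mul_smul, mul_smul,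
      smul_comm f₁ f₂ x]

theorem toRatFuncTensor_mapRange (T : RatFunc Q ⊗[Q] M →+ RatFunc Q ⊗[Q] M) (t : M →+ M)
    (hT : ∀ (k : ℕ) (m : M),
      T ((RatFunc.X ^ k : RatFunc Q) ⊗ₜ m) = (RatFunc.X ^ k : RatFunc Q) ⊗ₜ t m)
    (p : PolynomialModule Q M) : T (toRatFuncTensor p) = toRatFuncTensor (mapRange t p) := by
  induction p using PolynomialModule.induction_linear with
  | zero => simp
  | add p q hp hq => simp [hp, hq]
  | single k m => simp [hT]

end PolynomialModule

namespace Submodule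

open PolynomialModule

variable {Q : Type*} [Field Q] {M : Type*} [AddCommGroup M] [Module Q M]
  {N : Submodule (RatFunc Q) (RatFunc Q ⊗[Q] M)} {d : ℕ}

variable (N d) in
def leadingCoeffs : Submodule Q M :=
  (PolynomialModule.degreeLE d ⊓ (N.restrictScalars Q).comap
    (toRatFuncTensor.restrictScalars Q)).map (lcoeff Q d)

theorem mem_leadingCoeffs {m : M} :
    m ∈ N.leadingCoeffs d ↔
      ∃ p ∈ PolynomialModule.degreeLE d, toRatFuncTensor p ∈ N ∧ p.coeff d = m := by
  simp [leadingCoeffs, and_assoc]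

theorem map_mem_leadingCoeffs (T : RatFunc Q ⊗[Q] M →+ RatFunc Q ⊗[Q] M) (t : M →+ M)
    (hT : ∀ (k : ℕ) (m : M),
      T ((RatFunc.X ^ k : RatFunc Q) ⊗ₜ m) = (RatFunc.X ^ k : RatFunc Q) ⊗ₜ t m)
    (hN : ∀ z ∈ N, T z ∈ N) {m : M} (hm : m ∈ N.leadingCoeffs d) :
    t m ∈ N.leadingCoeffs d := by
  obtain ⟨p, hpd, hpN, rfl⟩ := mem_leadingCoeffs.mp hm
  refine mem_leadingCoeffs.mpr ⟨mapRange t p, fun k hk => by simp [hpd k hk], ?_,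
    coeff_mapRange ..⟩
  exact toRatFuncTensor_mapRange T t hT p ▸ hN _ hpN

theorem exists_leadingCoeffs_ne_bot (hN : N ≠ ⊥) : ∃ d, N.leadingCoeffs d ≠ ⊥ := by
  obtain ⟨z, hzN, hz⟩ := N.exists_mem_ne_zero_of_ne_bot hN
  obtain ⟨f, hf, p, hp⟩ := exists_smul_eq_toRatFuncTensor z
  have hp0 : p ≠ 0 := by
    rintro rfl
    rw [map_zero, ← algebraMap_smul (RatFunc Q), smul_eq_zero] at hp
    exact hp.elim (RatFunc.algebraMap_ne_zero hf) hz
  obtain ⟨d, hpd, hpd0⟩ := exists_mem_degreeLE_coeff_ne_zero hp0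
  have hpN : toRatFuncTensor p ∈ N := hp ▸ N.smul_of_tower_mem f hzN
  exact ⟨d, (Submodule.ne_bot_iff _).mpr
    ⟨p.coeff d, mem_leadingCoeffs.mpr ⟨p, hpd, hpN, rfl⟩, hpd0⟩⟩

theorem eq_top_of_leadingCoeffs_eq_top [FiniteDimensional Q M] (h : N.leadingCoeffs d = ⊤) :
    N = ⊤ := by
  let b := Module.finBasis Q M
  have hb : ∀ i, ∃ p ∈ PolynomialModule.degreeLE d, toRatFuncTensor p ∈ N ∧ p.coeff d = b i :=
    fun i => mem_leadingCoeffs.mp (h ▸ mem_top)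
  choose p hpd hpN hpb using hb
  have hliQX : LinearIndependent Q[X] p :=
    linearIndependent_of_linearIndependent_coeff hpd (by simpa only [hpb] using b.linearIndependent)
  have hli : LinearIndependent (RatFunc Q) (toRatFuncTensor ∘ p) :=
    (LinearIndependent.iff_fractionRing Q[X] (RatFunc Q)).mp <|
      hliQX.map' _ (LinearMap.ker_eq_bot.mpr toRatFuncTensor_injective)
  have hspan := hli.span_eq_top_of_card_eq_finrank' (by simp)
  exact eq_top_iff.mpr (hspan ▸ span_le.mpr (Set.range_subset_iff.mpr hpN))

end Submodule

end

theorem stmt11_general {Q : Type*} [Field Q] (φ : Q →+* Q)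
    {M : Type*} [AddCommGroup M] [Module Q M] [FiniteDimensional Q M]
    (τ : M →ₛₗ[φ] M)
    (hsimple : ∀ N : Submodule Q M, (∀ m ∈ N, τ m ∈ N) → N = ⊥ ∨ N = ⊤)
    (ψ : RatFunc Q →+* RatFunc Q)
    (hψX : ψ RatFunc.X = RatFunc.X)
    (τ' : RatFunc Q ⊗[Q] M → RatFunc Q ⊗[Q] M)
    (hadd : ∀ a b : RatFunc Q ⊗[Q] M, τ' (a + b) = τ' a + τ' b)
    (hτ' : ∀ (g : RatFunc Q) (m : M), τ' (g ⊗ₜ[Q] m) = ψ g ⊗ₜ[Q] τ m) :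
    ∀ N : Submodule (RatFunc Q) (RatFunc Q ⊗[Q] M),
      (∀ z ∈ N, τ' z ∈ N) → N = ⊥ ∨ N = ⊤ := by
  intro N hN
  refine or_iff_not_imp_left.mpr fun hN0 => ?_
  obtain ⟨d, hd⟩ := N.exists_leadingCoeffs_ne_bot hN0
  have hτX : ∀ (k : ℕ) (m : M),
      τ' ((RatFunc.X ^ k : RatFunc Q) ⊗ₜ m) = (RatFunc.X ^ k : RatFunc Q) ⊗ₜ τ m :=
    fun k m => by rw [hτ', map_pow, hψX]
  have hstable : ∀ m ∈ N.leadingCoeffs d, τ m ∈ N.leadingCoeffs d := fun _ =>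
    N.map_mem_leadingCoeffs (AddMonoidHom.mk' τ' hadd) τ.toAddMonoidHom hτX hN
  exact N.eq_top_of_leadingCoeffs_eq_top ((hsimple _ hstable).resolve_left hd)

/-- **Simplicity is preserved under the purely transcendental extension `Q(X)/Q`.**
Let `Q` be a field, `φ : Q → Q` a ring endomorphism, and `M` a nonzero finite-dimensional
`Q`-vector space with a `φ`-semilinear endomorphism `τ` whose image spans `M` and which is
simple (the only `τ`-stable subspaces are `0` and `M`).  Let `ψ = φ̂` be the endomorphism of
`Q(X)` extending `φ` with `ψ(X) = X`, and let `τ'` be the `ψ`-semilinear endomorphism of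
`M' = Q(X) ⊗_Q M` with `τ'(g ⊗ m) = ψ(g) ⊗ τ(m)`.  Then `(M', τ')` is simple: its only
`τ'`-stable `Q(X)`-subspaces are `0` and `M'`. -/
theorem stmt11 {Q : Type*} [Field Q] (φ : Q →+* Q)
    {M : Type*} [AddCommGroup M] [Module Q M] [FiniteDimensional Q M] [Nontrivial M]
    (τ : M →ₛₗ[φ] M)
    (hspan : Submodule.span Q (Set.range fun m : M => τ m) = ⊤)
    (hsimple : ∀ N : Submodule Q M, (∀ m ∈ N, τ m ∈ N) → N = ⊥ ∨ N = ⊤)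
    (ψ : RatFunc Q →+* RatFunc Q)
    (hψC : ∀ a : Q, ψ (RatFunc.C a) = RatFunc.C (φ a))
    (hψX : ψ RatFunc.X = RatFunc.X)
    (τ' : RatFunc Q ⊗[Q] M → RatFunc Q ⊗[Q] M)
    (hadd : ∀ a b : RatFunc Q ⊗[Q] M, τ' (a + b) = τ' a + τ' b)
    (hτ' : ∀ (g : RatFunc Q) (m : M), τ' (g ⊗ₜ[Q] m) = ψ g ⊗ₜ[Q] τ m) :
    ∀ N : Submodule (RatFunc Q) (RatFunc Q ⊗[Q] M),
      (∀ z ∈ N, τ' z ∈ N) → N = ⊥ ∨ N = ⊤ :=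
  stmt11_general φ τ hsimple ψ hψX τ' hadd hτ'
end

section
/- Let Q be a field, φ : Q → Q a ring endomorphism, and d ≥ 1 an integer. Let R = Q^d with componentwise ring operations, and let σ : R → R be the ring endomorphism σ(z_0, …, z_{d−1}) = (φ(z_{d−1}), φ(z_0), …, φ(z_{d−2})). Let M be a finitely generated R-module equipped with a σ-semilinear endomorphism τ : M → M such that the R-span of τ(M) equals M. Then M is a free R-module. -/
/-!
Let `e_i = Pi.single i 1` be the standard idempotents of `R = Q^d`, so that `M = ⊕ e_i M`, where
each `e_i M` is a finite-dimensional `Q`-vector space on which `R` acts through its `i`-th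
coordinate. Since `σ e_i = e_{i+1}` and `τ` is `φ`-semilinear over `Q`, the vectors `τ (e_i M)`
lie in `e_{i+1} M` and span it over `Q`, so `dim e_{i+1} M ≤ dim e_i M`. Going once around the
cycle forces all these dimensions to be equal, and the sums `∑ i, b_i k` of `Q`-bases `b_i` of the
`e_i M` indexed by one common set form an `R`-basis of `M`.
-/

open Module Submodule

section PiComponent

variable (K M : Type*) {ι : Type*} [Field K] [DecidableEq ι]
  [AddCommGroup M] [Module (ι → K) M] [Module K M] [IsScalarTower K (ι → K) M]

def piComponent (i : ι) : Submodule K M where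
  carrier := {m | (Pi.single i 1 : ι → K) • m = m}
  add_mem' ha hb := by simp_all only [Set.mem_ofPred_eq, smul_add]
  zero_mem' := smul_zero _
  smul_mem' c m hm := by simp_all only [Set.mem_ofPred_eq, smul_comm _ c]

variable {K M}

theorem mem_piComponent {i : ι} {m : M} :
    m ∈ piComponent K M i ↔ (Pi.single i 1 : ι → K) • m = m := Iff.rfl

theorem single_one_smul_mem_piComponent (i : ι) (m : M) :
    (Pi.single i 1 : ι → K) • m ∈ piComponent K M i := by
  rw [mem_piComponent, smul_smul, ← Pi.single_mul, one_mul]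

theorem smul_eq_apply_smul_of_mem_piComponent {i : ι} {m : M} (hm : m ∈ piComponent K M i)
    (r : ι → K) : r • m = r i • m := by
  rw [← mem_piComponent.1 hm, smul_smul, ← smul_assoc]
  congr 1
  ext j
  by_cases h : j = i <;> simp [h]

theorem restrictScalars_span_eq_span_of_subset_piComponent {i : ι} {s : Set M}
    (hs : s ⊆ piComponent K M i) :
    (span (ι → K) s).restrictScalars K = span K s := by
  refine le_antisymm (fun m hm => ?_) (span_le_restrictScalars K (ι → K) s)
  have hle : span K s ≤ piComponent K M i := span_le.2 hs
  induction hm using span_induction with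
  | mem x hx => exact subset_span hx
  | zero => exact zero_mem _
  | add x y _ _ hx hy => exact add_mem hx hy
  | smul r x _ hx =>
    rw [smul_eq_apply_smul_of_mem_piComponent (hle hx)]
    exact smul_mem _ _ hx

variable [Fintype ι] {κ : Type*} (b : ∀ i : ι, Basis κ K (piComponent K M i))

theorem single_one_smul_sum_basis_piComponent (i : ι) (k : κ) :
    (Pi.single i 1 : ι → K) • ∑ j, (b j k : M) = b i k := by
  simp_rw [Finset.smul_sum, smul_eq_apply_smul_of_mem_piComponent (b _ k).2]
  simp [Pi.single_apply]

theorem linearIndependent_sum_basis_piComponent :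
    LinearIndependent (ι → K) fun k => ∑ i, (b i k : M) := by
  rw [linearIndependent_iff']
  intro s g hg k hk
  ext i
  have hgi : ∑ k ∈ s, g k i • b i k = 0 := by
    apply Subtype.ext
    calc ((∑ k ∈ s, g k i • b i k : piComponent K M i) : M)
        = ∑ k ∈ s, g k • (Pi.single i 1 : ι → K) • ∑ j, (b j k : M) := by
          simp only [single_one_smul_sum_basis_piComponent, coe_sum, coe_smul,
            smul_eq_apply_smul_of_mem_piComponent (b i _).2]
      _ = (Pi.single i 1 : ι → K) • ∑ k ∈ s, g k • ∑ j, (b j k : M) := by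
          simp only [Finset.smul_sum, smul_comm (Pi.single i 1 : ι → K)]
      _ = 0 := by rw [hg, smul_zero]
  exact linearIndependent_iff'.1 (b i).linearIndependent s (fun k => g k i) hgi k hk

theorem span_sum_basis_piComponent :
    span (ι → K) (Set.range fun k => ∑ i, (b i k : M)) = ⊤ := by
  set P := (span (ι → K) (Set.range fun k => ∑ i, (b i k : M))).restrictScalars K
  have hcomp : ∀ (i : ι) (x : piComponent K M i), (x : M) ∈ P := by
    intro i x
    refine span_le (p := P.comap (piComponent K M i).subtype) |>.2 ?_ ((b i).mem_span x)
    rintro _ ⟨k, rfl⟩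
    rw [SetLike.mem_coe, mem_comap, subtype_apply, ← single_one_smul_sum_basis_piComponent b]
    exact (span (ι → K) _).smul_mem _ (subset_span ⟨k, rfl⟩)
  refine eq_top_iff.2 fun m _ => ?_
  rw [← one_smul (ι → K) m, ← Finset.univ_sum_single (1 : ι → K), Finset.sum_smul]
  exact sum_mem fun i _ => hcomp i ⟨_, single_one_smul_mem_piComponent i m⟩

noncomputable def basisOfPiComponent : Basis κ (ι → K) M :=
  Basis.mk (linearIndependent_sum_basis_piComponent b) (span_sum_basis_piComponent b).ge

theorem Module.free_of_finrank_piComponent_eq [Module.Finite K M] (n : ℕ)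
    (h : ∀ i : ι, finrank K (piComponent K M i) = n) : Module.Free (ι → K) M :=
  .of_basis (basisOfPiComponent fun i => finBasisOfFinrankEq K _ (h i))

end PiComponent

def LinearMap.restrictScalarsₛₗ {K R S M N : Type*} [CommSemiring K] [Semiring R] [Semiring S]
    [Algebra K R] [Algebra K S] [AddCommMonoid M] [AddCommMonoid N] [Module R M] [Module S N]
    [Module K M] [Module K N] [IsScalarTower K R M] [IsScalarTower K S N]
    {σ : R →+* S} {φ : K →+* K} (f : M →ₛₗ[σ] N)
    (h : ∀ c, σ (algebraMap K R c) = algebraMap K S (φ c)) : M →ₛₗ[φ] N where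
  toFun := f
  map_add' := f.map_add
  map_smul' c m := by rw [← algebraMap_smul R c m, f.map_smulₛₗ, h, algebraMap_smul]

theorem finrank_span_image_le {K V W : Type*} [Field K] [AddCommGroup V] [AddCommGroup W]
    [Module K V] [Module K W] {φ : K →+* K} (f : V →ₛₗ[φ] W) (U : Submodule K V)
    [FiniteDimensional K U] : finrank K (span K (f '' U)) ≤ finrank K U := by
  let b := finBasis K U
  have himage : f '' U ⊆ span K (Set.range fun k => f (b k)) := by
    rintro _ ⟨u, hu, rfl⟩
    rw [← Subtype.coe_mk u hu, ← b.sum_repr ⟨u, hu⟩]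
    simp only [coe_sum, coe_smul, map_sum, f.map_smulₛₗ]
    exact sum_mem fun k _ => smul_mem _ _ (subset_span ⟨k, rfl⟩)
  have hspan : span K (f '' U) = span K (Set.range fun k => f (b k)) :=
    le_antisymm (span_le.2 himage)
      (span_mono (Set.range_subset_iff.2 fun k => ⟨b k, (b k).2, rfl⟩))
  calc finrank K (span K (f '' U))
      = finrank K (span K (Set.range fun k => f (b k))) := by rw [hspan]
    _ ≤ Fintype.card (Fin (finrank K U)) := finrank_range_le_card _
    _ = finrank K U := Fintype.card_fin _

section SemilinearEndomorphism

variable {K M ι : Type*} [Field K] [DecidableEq ι]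
  [AddCommGroup M] [Module (ι → K) M] [Module K M] [IsScalarTower K (ι → K) M]
  {σ : (ι → K) →+* (ι → K)} (τ : M →ₛₗ[σ] M) {i j : ι}

theorem map_mem_piComponent (hσ : σ (Pi.single i 1) = Pi.single j 1) {m : M}
    (hm : m ∈ piComponent K M i) : τ m ∈ piComponent K M j := by
  rw [mem_piComponent, ← hσ, ← τ.map_smulₛₗ, mem_piComponent.1 hm]

theorem piComponent_le_span_image (hσ : σ (Pi.single i 1) = Pi.single j 1)
    (hspan : span (ι → K) (Set.range τ) = ⊤) :
    piComponent K M j ≤ span K (τ '' piComponent K M i) := by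
  intro m hm
  rw [← restrictScalars_span_eq_span_of_subset_piComponent (i := j)
    (Set.image_subset_iff.2 fun _ => map_mem_piComponent τ hσ), restrictScalars_mem,
    ← mem_piComponent.1 hm]
  let ej := DistribSMul.toLinearMap (ι → K) M (Pi.single j 1 : ι → K)
  have hmap : ej '' Set.range τ ⊆ τ '' piComponent K M i := by
    rintro _ ⟨_, ⟨z, rfl⟩, rfl⟩
    refine ⟨_, single_one_smul_mem_piComponent i z, ?_⟩
    rw [τ.map_smulₛₗ, hσ]
    rfl
  have hm' : ej m ∈ (span (ι → K) (Set.range τ)).map ej := mem_map_of_mem (hspan ▸ mem_top)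
  rw [map_span] at hm'
  exact span_mono hmap hm'

theorem finrank_piComponent_le [Module.Finite K M] {φ : K →+* K}
    (hσK : ∀ c, σ (algebraMap K (ι → K) c) = algebraMap K (ι → K) (φ c))
    (hσ : σ (Pi.single i 1) = Pi.single j 1) (hspan : span (ι → K) (Set.range τ) = ⊤) :
    finrank K (piComponent K M j) ≤ finrank K (piComponent K M i) :=
  (finrank_mono (piComponent_le_span_image τ hσ hspan)).trans
    (finrank_span_image_le (τ.restrictScalarsₛₗ hσK) _)

end SemilinearEndomorphism

open Fin.NatCast in
theorem Fin.apply_eq_of_apply_add_one_le {α : Type*} [PartialOrder α] {d : ℕ} [NeZero d]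
    {f : Fin d → α} (hf : ∀ i, f (i + 1) ≤ f i) (i j : Fin d) : f i = f j := by
  have hiter : ∀ (i : Fin d) (k : ℕ), f (i + k) ≤ f i := by
    intro i k
    induction k with
    | zero => simp
    | succ k ih =>
      rw [Nat.cast_succ, ← add_assoc]
      exact (hf _).trans ih
  have hle : ∀ i j : Fin d, f j ≤ f i := fun i j => by
    simpa only [Fin.cast_val_eq_self, add_sub_cancel] using hiter i (j - i).val
  exact le_antisymm (hle j i) (hle i j)

/-- **Restricted modules over `Q^d` with a transitive twist are free** (Lemma 3.9(b)).
Let `Q` be a field, `φ : Q → Q` a ring endomorphism and `d ≥ 1`.  Let `R = Q^d` and let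
`σ : R → R` be the ring endomorphism `σ(z_0, …, z_{d-1}) = (φ(z_{d-1}), φ(z_0), …, φ(z_{d-2}))`
(which permutes the `d` factor fields transitively).  If `M` is a finitely generated
`R`-module with a `σ`-semilinear endomorphism `τ` whose image spans `M` over `R`, then `M`
is a free `R`-module. -/
theorem stmt14 {Q : Type*} [Field Q] (φ : Q →+* Q) (d : ℕ) [NeZero d]
    {M : Type*} [AddCommGroup M] [Module (Fin d → Q) M] [Module.Finite (Fin d → Q) M]
    (σ : (Fin d → Q) →+* (Fin d → Q))
    (hσ : ∀ (z : Fin d → Q) (i : Fin d), σ z i = φ (z (i - 1)))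
    (τ : M →ₛₗ[σ] M)
    (hspan : Submodule.span (Fin d → Q) (Set.range fun m : M => τ m) = ⊤) :
    Module.Free (Fin d → Q) M := by
  let : Module Q M := Module.compHom M (algebraMap Q (Fin d → Q))
  have : IsScalarTower Q (Fin d → Q) M := .of_algebraMap_smul fun _ _ => rfl
  have : Module.Finite Q M := .trans (Fin d → Q) M
  have hσK : ∀ c, σ (algebraMap Q _ c) = algebraMap Q _ (φ c) := fun c => by
    ext i
    simp [hσ]
  have hσe : ∀ i : Fin d, σ (Pi.single i 1) = Pi.single (i + 1) 1 := fun i => by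
    ext j
    simp [hσ, Pi.single_apply, sub_eq_iff_eq_add]
  have hle : ∀ i : Fin d, finrank Q (piComponent Q M (i + 1)) ≤ finrank Q (piComponent Q M i) :=
    fun i => finrank_piComponent_le τ hσK (hσe i) hspan
  exact Module.free_of_finrank_piComponent_eq _ fun i =>
    Fin.apply_eq_of_apply_add_one_le (f := fun i => finrank Q (piComponent Q M i)) hle i 0
end
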